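/- With V_{ij} = v_i⊗v_j + q^{δ_{ij}+1} v_j⊗v_i for i ≥ j, suppose N ≥ 2, 0 < q < 1, and β : span{V_{ij} : i ≥ j} → K is a linear map such that for all i ≥ j ≥ k the element V_{ijk} (defined via the symmetrizer Sym_3) satisfies (β⊗id − id⊗β)(V_{ijk}) = 0, where β⊗id and id⊗β are evaluated using the two expansions of V_{ijk} in terms of V_{ab}⊗v_c and v_a⊗V_{bc}. Then β = 0. -/

import Mathlib

/-!
For `k < i` the symmetrizer gives `V_{iik} = (1 + q²)(v_i⊗v_i⊗v_k + q v_i⊗v_k⊗v_i + q² v_k⊗v_i⊗v_i)`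
and `V_{ikk} = (1 + q²)(v_i⊗v_k⊗v_k + q v_k⊗v_i⊗v_k + q² v_k⊗v_k⊗v_i)`. Comparing the coefficients of
`v_i` and `v_k` in `(β ⊗ id - id ⊗ β)(V) = 0` yields `(1 - q⁴) β(v_i⊗v_i) = 0` and
`(1 + q²)(q - 1) β(V_{ik}) = 0` from `V_{iik}`, and `(1 - q⁴) β(v_k⊗v_k) = 0` from `V_{ikk}`.
As `q² ≠ 1`, and every index has a smaller or a larger partner when `N ≥ 2`, `β` kills every `V_{ij}`.
-/

open TensorProduct LinearMap

noncomputable section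

def op1 {K : Type} [Field K] {M : Type} [AddCommGroup M] [Module K M]
    (f : M ⊗[K] M →ₗ[K] M ⊗[K] M) : M ⊗[K] (M ⊗[K] M) →ₗ[K] M ⊗[K] (M ⊗[K] M) :=
  (TensorProduct.assoc K M M M).toLinearMap ∘ₗ (LinearMap.rTensor M f) ∘ₗ
    (TensorProduct.assoc K M M M).symm.toLinearMap

def op2 {K : Type} [Field K] {M : Type} [AddCommGroup M] [Module K M]
    (f : M ⊗[K] M →ₗ[K] M ⊗[K] M) : M ⊗[K] (M ⊗[K] M) →ₗ[K] M ⊗[K] (M ⊗[K] M) :=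
  LinearMap.lTensor M f

/-- The degree-3 symmetrizer `id + σ₁ + σ₂ + σ₁σ₂ + σ₂σ₁ + σ₁σ₂σ₁`. -/
def Sym3 {K : Type} [Field K] {M : Type} [AddCommGroup M] [Module K M]
    (σ : M ⊗[K] M →ₗ[K] M ⊗[K] M) : M ⊗[K] (M ⊗[K] M) →ₗ[K] M ⊗[K] (M ⊗[K] M) :=
  LinearMap.id + op1 σ + op2 σ + op1 σ ∘ₗ op2 σ + op2 σ ∘ₗ op1 σ +
    op1 σ ∘ₗ op2 σ ∘ₗ op1 σ

variable (N : ℕ) (q : ℝ)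

def vb : Module.Basis (Fin N) ℝ (Fin N → ℝ) := Pi.basisFun ℝ (Fin N)

/-- `σ(v_i ⊗ v_j) = q^{δ_{ij}+1} v_j ⊗ v_i + θ(j-i) q(q - q⁻¹) v_i ⊗ v_j`. -/
def sigma : (Fin N → ℝ) ⊗[ℝ] (Fin N → ℝ) →ₗ[ℝ] (Fin N → ℝ) ⊗[ℝ] (Fin N → ℝ) :=
  ((vb N).tensorProduct (vb N)).constr ℝ fun p =>
    (if p.1 = p.2 then q ^ 2 else q) • (vb N p.2 ⊗ₜ[ℝ] vb N p.1) +
    (if (p.1 : ℕ) < (p.2 : ℕ) then q * (q - q⁻¹) else 0) • (vb N p.1 ⊗ₜ[ℝ] vb N p.2)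

/-- `V_{ij} = (id + σ)(v_i ⊗ v_j) = v_i ⊗ v_j + q^{δ_{ij}+1} v_j ⊗ v_i`, intended for `i ≥ j`. -/
def Vel (i j : Fin N) : (Fin N → ℝ) ⊗[ℝ] (Fin N → ℝ) :=
  vb N i ⊗ₜ[ℝ] vb N j + (if i = j then q ^ 2 else q) • (vb N j ⊗ₜ[ℝ] vb N i)

/-- `V_{ijk} = Sym₃(v_i ⊗ v_j ⊗ v_k)`. -/
def Velijk (i j k : Fin N) : (Fin N → ℝ) ⊗[ℝ] ((Fin N → ℝ) ⊗[ℝ] (Fin N → ℝ)) :=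
  Sym3 (sigma N q) (vb N i ⊗ₜ[ℝ] (vb N j ⊗ₜ[ℝ] vb N k))

/-- `β ⊗ id` evaluated on triple tensors. -/
def betaId (β : (Fin N → ℝ) ⊗[ℝ] (Fin N → ℝ) →ₗ[ℝ] ℝ) :
    (Fin N → ℝ) ⊗[ℝ] ((Fin N → ℝ) ⊗[ℝ] (Fin N → ℝ)) →ₗ[ℝ] (Fin N → ℝ) :=
  (TensorProduct.lid ℝ (Fin N → ℝ)).toLinearMap ∘ₗ LinearMap.rTensor (Fin N → ℝ) β ∘ₗ
    (TensorProduct.assoc ℝ (Fin N → ℝ) (Fin N → ℝ) (Fin N → ℝ)).symm.toLinearMap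

/-- `id ⊗ β` evaluated on triple tensors. -/
def idBeta (β : (Fin N → ℝ) ⊗[ℝ] (Fin N → ℝ) →ₗ[ℝ] ℝ) :
    (Fin N → ℝ) ⊗[ℝ] ((Fin N → ℝ) ⊗[ℝ] (Fin N → ℝ)) →ₗ[ℝ] (Fin N → ℝ) :=
  (TensorProduct.rid ℝ (Fin N → ℝ)).toLinearMap ∘ₗ LinearMap.lTensor (Fin N → ℝ) β

lemma vb_apply (a b : Fin N) : vb N a b = if b = a then 1 else 0 := by
  simp [vb, Pi.single_apply]

lemma sigma_tmul (a b : Fin N) : sigma N q (vb N a ⊗ₜ[ℝ] vb N b) =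
    (if a = b then q ^ 2 else q) • (vb N b ⊗ₜ[ℝ] vb N a) +
    (if a < b then q * (q - q⁻¹) else 0) • (vb N a ⊗ₜ[ℝ] vb N b) := by
  have h := ((vb N).tensorProduct (vb N)).constr_basis ℝ
    (fun p => (if p.1 = p.2 then q ^ 2 else q) • (vb N p.2 ⊗ₜ[ℝ] vb N p.1) +
      (if (p.1 : ℕ) < (p.2 : ℕ) then q * (q - q⁻¹) else 0) • (vb N p.1 ⊗ₜ[ℝ] vb N p.2)) (a, b)
  rwa [Module.Basis.tensorProduct_apply] at h

section TripleTensor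

variable {K M : Type} [Field K] [AddCommGroup M] [Module K M]

lemma op1_tmul (f : M ⊗[K] M →ₗ[K] M ⊗[K] M) (x y z : M) :
    op1 f (x ⊗ₜ (y ⊗ₜ z)) = TensorProduct.assoc K M M M (f (x ⊗ₜ y) ⊗ₜ z) := by
  simp [op1]

lemma op2_tmul (f : M ⊗[K] M →ₗ[K] M ⊗[K] M) (x y z : M) :
    op2 f (x ⊗ₜ (y ⊗ₜ z)) = x ⊗ₜ f (y ⊗ₜ z) :=
  rfl

end TripleTensor

lemma betaId_tmul (β : (Fin N → ℝ) ⊗[ℝ] (Fin N → ℝ) →ₗ[ℝ] ℝ) (x y z : Fin N → ℝ) :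
    betaId N β (x ⊗ₜ (y ⊗ₜ z)) = β (x ⊗ₜ y) • z := by
  simp [betaId]

lemma idBeta_tmul (β : (Fin N → ℝ) ⊗[ℝ] (Fin N → ℝ) →ₗ[ℝ] ℝ) (x y z : Fin N → ℝ) :
    idBeta N β (x ⊗ₜ (y ⊗ₜ z)) = β (y ⊗ₜ z) • x := by
  simp [idBeta]

lemma Velijk_iik {i k : Fin N} (hki : k < i) : Velijk N q i i k =
    (1 + q ^ 2) • (vb N i ⊗ₜ[ℝ] (vb N i ⊗ₜ[ℝ] vb N k)) +
    (q + q ^ 3) • (vb N i ⊗ₜ[ℝ] (vb N k ⊗ₜ[ℝ] vb N i)) +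
    (q ^ 2 + q ^ 4) • (vb N k ⊗ₜ[ℝ] (vb N i ⊗ₜ[ℝ] vb N i)) := by
  simp [Velijk, Sym3, op1_tmul, op2_tmul, sigma_tmul, hki.ne', not_lt_of_gt hki,
    tmul_smul, ← smul_tmul', smul_smul]
  module

lemma Velijk_ikk {i k : Fin N} (hki : k < i) : Velijk N q i k k =
    (1 + q ^ 2) • (vb N i ⊗ₜ[ℝ] (vb N k ⊗ₜ[ℝ] vb N k)) +
    (q + q ^ 3) • (vb N k ⊗ₜ[ℝ] (vb N i ⊗ₜ[ℝ] vb N k)) +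
    (q ^ 2 + q ^ 4) • (vb N k ⊗ₜ[ℝ] (vb N k ⊗ₜ[ℝ] vb N i)) := by
  simp [Velijk, Sym3, op1_tmul, op2_tmul, sigma_tmul, hki.ne', not_lt_of_gt hki,
    tmul_smul, ← smul_tmul', smul_smul]
  module

section Constraints

variable {N q} (β : (Fin N → ℝ) ⊗[ℝ] (Fin N → ℝ) →ₗ[ℝ] ℝ) {i k : Fin N}

lemma beta_tmul_self_eq_zero_of_iik (hki : k < i) (hq : q ^ 2 ≠ 1)
    (h : betaId N β (Velijk N q i i k) = idBeta N β (Velijk N q i i k)) :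
    β (vb N i ⊗ₜ vb N i) = 0 := by
  rw [Velijk_iik N q hki] at h
  simp only [map_add, map_smul, betaId_tmul, idBeta_tmul] at h
  have hk := congrFun h k
  simp only [Pi.add_apply, Pi.smul_apply, smul_eq_mul, vb_apply, hki.ne, if_true, if_false,
    mul_one, mul_zero, add_zero, zero_add] at hk
  refine mul_left_cancel₀ (mul_ne_zero (by positivity) (sub_ne_zero.2 hq.symm) :
    (1 + q ^ 2) * (1 - q ^ 2) ≠ 0) ?_
  linear_combination hk

lemma beta_Vel_eq_zero_of_iik (hki : k < i) (hq : q ≠ 1)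
    (h : betaId N β (Velijk N q i i k) = idBeta N β (Velijk N q i i k)) :
    β (Vel N q i k) = 0 := by
  rw [Velijk_iik N q hki] at h
  simp only [map_add, map_smul, betaId_tmul, idBeta_tmul] at h
  have hi := congrFun h i
  simp only [Pi.add_apply, Pi.smul_apply, smul_eq_mul, vb_apply, hki.ne', if_true, if_false,
    mul_one, mul_zero, add_zero, zero_add] at hi
  rw [Vel, if_neg hki.ne', map_add, map_smul, smul_eq_mul]
  refine mul_left_cancel₀ (mul_ne_zero (by positivity) (sub_ne_zero.2 hq) :
    (1 + q ^ 2) * (q - 1) ≠ 0) ?_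
  linear_combination hi

lemma beta_tmul_self_eq_zero_of_ikk (hki : k < i) (hq : q ^ 2 ≠ 1)
    (h : betaId N β (Velijk N q i k k) = idBeta N β (Velijk N q i k k)) :
    β (vb N k ⊗ₜ vb N k) = 0 := by
  rw [Velijk_ikk N q hki] at h
  simp only [map_add, map_smul, betaId_tmul, idBeta_tmul] at h
  have hi := congrFun h i
  simp only [Pi.add_apply, Pi.smul_apply, smul_eq_mul, vb_apply, hki.ne', if_true, if_false,
    mul_one, mul_zero, add_zero, zero_add] at hi
  refine mul_left_cancel₀ (mul_ne_zero (by positivity) (sub_ne_zero.2 hq.symm) :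
    (1 + q ^ 2) * (1 - q ^ 2) ≠ 0) ?_
  linear_combination -hi

end Constraints

/-- There are no nontrivial quadratic-constant PBW-deformations of `Λ_q(V)`:
if `(β ⊗ id - id ⊗ β)(V_{ijk}) = 0` for all `i ≥ j ≥ k`, then `β` vanishes on all `V_{ij}`. -/
theorem no_pbw_deformation_simple (hN : 2 ≤ N) (hq0 : 0 < q) (hq1 : q < 1)
    (β : (Fin N → ℝ) ⊗[ℝ] (Fin N → ℝ) →ₗ[ℝ] ℝ)
    (hβ : ∀ i j k : Fin N, k ≤ j → j ≤ i →
      betaId N β (Velijk N q i j k) = idBeta N β (Velijk N q i j k)) :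
    ∀ i j : Fin N, j ≤ i → β (Vel N q i j) = 0 := by
  have hq : q ^ 2 ≠ 1 := (pow_lt_one₀ hq0.le hq1 two_ne_zero).ne
  have hdiag (a : Fin N) : β (vb N a ⊗ₜ vb N a) = 0 := by
    obtain ⟨b, hba⟩ := Fintype.exists_ne_of_one_lt_card (by rw [Fintype.card_fin]; omega) a
    rcases hba.lt_or_gt with hba | hab
    · exact beta_tmul_self_eq_zero_of_iik β hba hq (hβ a a b hba.le le_rfl)
    · exact beta_tmul_self_eq_zero_of_ikk β hab hq (hβ b a a le_rfl hab.le)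
  intro i j hji
  rcases hji.eq_or_lt with rfl | hji
  · simp [Vel, hdiag]
  · exact beta_Vel_eq_zero_of_iik β hji hq1.ne (hβ i i j hji.le le_rfl)

end
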